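/- For the iterated logarithm b(t) = μ/((1+t)·∏_{k=1}^{m} log^[k](e^[k]+t)), the primitive satisfies exp((1/2)∫₀ᵗ b(τ)dτ) ~ (log^[m](e^[m]+t))^(μ/2); in the simplest case m = 1: exp((1/2)∫₀ᵗ μ/((1+τ)log(e+τ)) dτ) is bounded above and below by positive constant multiples of (log(e+t))^(μ/2) for t ≥ 0. -/

import Mathlib

open Real Set

theorem stmt_16 (μ : ℝ) (hμ : 0 < μ) :
    ∃ c C : ℝ, 0 < c ∧ 0 < C ∧ ∀ t ≥ (0:ℝ),
      c * (Real.log (Real.exp 1 + t)) ^ (μ/2)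
        ≤ Real.exp ((1/2) * ∫ τ in (0:ℝ)..t, μ / ((1 + τ) * Real.log (Real.exp 1 + τ))) ∧
      Real.exp ((1/2) * ∫ τ in (0:ℝ)..t, μ / ((1 + τ) * Real.log (Real.exp 1 + τ)))
        ≤ C * (Real.log (Real.exp 1 + t)) ^ (μ/2) := by
  refine ⟨1, Real.exp (μ * (Real.exp 1 - 1) / 2), one_pos, Real.exp_pos _, ?_⟩
  intro t ht
  have hE : (1:ℝ) < Real.exp 1 := by
    have := Real.exp_one_gt_d9; linarith
  have hpos : ∀ τ : ℝ, 0 ≤ τ → 0 < Real.exp 1 + τ := fun τ hτ => by linarith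
  have hL1 : ∀ τ : ℝ, 0 ≤ τ → 1 ≤ Real.log (Real.exp 1 + τ) := by
    intro τ hτ
    have := Real.log_le_log (Real.exp_pos 1) (by linarith : Real.exp 1 ≤ Real.exp 1 + τ)
    simpa [Real.log_exp] using this
  have huIcc : uIcc (0:ℝ) t = Icc 0 t := uIcc_of_le ht
  -- continuity helpers
  have hcontL : ContinuousOn (fun τ : ℝ => Real.log (Real.exp 1 + τ)) (Icc 0 t) := by
    apply ContinuousOn.log (by fun_prop)
    intro τ hτ; exact ne_of_gt (hpos τ hτ.1)
  have hcontg : ContinuousOn (fun τ : ℝ => 1 / ((1 + τ) * Real.log (Real.exp 1 + τ))) (Icc 0 t) := by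
    apply ContinuousOn.div continuousOn_const
    · exact (by fun_prop : ContinuousOn (fun τ : ℝ => 1 + τ) (Icc 0 t)).mul hcontL
    · intro τ hτ
      have h1 : (0:ℝ) < 1 + τ := by linarith [hτ.1]
      have h2 := hL1 τ hτ.1
      positivity
  have hcontf1 : ContinuousOn
      (fun τ : ℝ => 1 / ((Real.exp 1 + τ) * Real.log (Real.exp 1 + τ))) (Icc 0 t) := by
    apply ContinuousOn.div continuousOn_const
    · exact (by fun_prop : ContinuousOn (fun τ : ℝ => Real.exp 1 + τ) (Icc 0 t)).mul hcontL
    · intro τ hτ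
      have h1 := hpos τ hτ.1
      have h2 := hL1 τ hτ.1
      positivity
  have hcontf2 : ContinuousOn
      (fun τ : ℝ => 1 / ((Real.exp 1 + τ) * Real.log (Real.exp 1 + τ))
        + (Real.exp 1 - 1) / (1 + τ) ^ 2) (Icc 0 t) := by
    apply hcontf1.add
    apply ContinuousOn.div continuousOn_const (by fun_prop)
    intro τ hτ
    have h1 : (0:ℝ) < 1 + τ := by linarith [hτ.1]
    positivity
  have hintg : IntervalIntegrable (fun τ : ℝ => 1 / ((1 + τ) * Real.log (Real.exp 1 + τ)))
      MeasureTheory.volume 0 t := (huIcc ▸ hcontg).intervalIntegrable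
  have hintf1 : IntervalIntegrable
      (fun τ : ℝ => 1 / ((Real.exp 1 + τ) * Real.log (Real.exp 1 + τ)))
      MeasureTheory.volume 0 t := (huIcc ▸ hcontf1).intervalIntegrable
  have hintf2 : IntervalIntegrable
      (fun τ : ℝ => 1 / ((Real.exp 1 + τ) * Real.log (Real.exp 1 + τ))
        + (Real.exp 1 - 1) / (1 + τ) ^ 2)
      MeasureTheory.volume 0 t := (huIcc ▸ hcontf2).intervalIntegrable
  -- derivatives
  have hderiv1 : ∀ τ ∈ uIcc (0:ℝ) t,
      HasDerivAt (fun s : ℝ => Real.log (Real.log (Real.exp 1 + s)))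
        (1 / ((Real.exp 1 + τ) * Real.log (Real.exp 1 + τ))) τ := by
    intro τ hτ
    rw [huIcc] at hτ
    have h1 : HasDerivAt (fun s : ℝ => Real.exp 1 + s) 1 τ := by
      simpa using (hasDerivAt_id τ).const_add (Real.exp 1)
    have h2 : HasDerivAt (fun s : ℝ => Real.log (Real.exp 1 + s)) (Real.exp 1 + τ)⁻¹ τ := by
      simpa [Function.comp_def] using (Real.hasDerivAt_log (ne_of_gt (hpos τ hτ.1))).comp τ h1
    have hLne : Real.log (Real.exp 1 + τ) ≠ 0 := by
      have := hL1 τ hτ.1; linarith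
    have h3 := (Real.hasDerivAt_log hLne).comp τ h2
    refine h3.congr_deriv ?_
    rw [one_div, mul_inv]
    ring
  have hderiv2 : ∀ τ ∈ uIcc (0:ℝ) t,
      HasDerivAt (fun s : ℝ => Real.log (Real.log (Real.exp 1 + s))
        - (Real.exp 1 - 1) * (1 + s)⁻¹)
        (1 / ((Real.exp 1 + τ) * Real.log (Real.exp 1 + τ))
          + (Real.exp 1 - 1) / (1 + τ) ^ 2) τ := by
    intro τ hτ
    have hτ' := hτ; rw [huIcc] at hτ'
    have h1 : (0:ℝ) < 1 + τ := by linarith [hτ'.1]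
    have h4 : HasDerivAt (fun s : ℝ => 1 + s) 1 τ := by
      simpa using (hasDerivAt_id τ).const_add (1:ℝ)
    have h5 : HasDerivAt (fun s : ℝ => (1 + s)⁻¹) (-1 / (1 + τ) ^ 2) τ :=
      h4.inv (ne_of_gt h1)
    have h6 := (hderiv1 τ hτ).sub (h5.const_mul (Real.exp 1 - 1))
    refine h6.congr_deriv ?_
    ring
  -- FTC evaluations
  have hI1 : (∫ τ in (0:ℝ)..t, 1 / ((Real.exp 1 + τ) * Real.log (Real.exp 1 + τ)))
      = Real.log (Real.log (Real.exp 1 + t)) := by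
    rw [intervalIntegral.integral_eq_sub_of_hasDerivAt hderiv1 hintf1]
    simp [Real.log_exp]
  have hI2 : (∫ τ in (0:ℝ)..t, (1 / ((Real.exp 1 + τ) * Real.log (Real.exp 1 + τ))
        + (Real.exp 1 - 1) / (1 + τ) ^ 2))
      = Real.log (Real.log (Real.exp 1 + t)) - (Real.exp 1 - 1) * (1 + t)⁻¹
        + (Real.exp 1 - 1) := by
    rw [intervalIntegral.integral_eq_sub_of_hasDerivAt hderiv2 hintf2]
    simp [Real.log_exp]
    ring
  -- pointwise comparison
  have hlowpt : ∀ τ ∈ Icc (0:ℝ) t,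
      1 / ((Real.exp 1 + τ) * Real.log (Real.exp 1 + τ))
        ≤ 1 / ((1 + τ) * Real.log (Real.exp 1 + τ)) := by
    intro τ hτ
    have h1 : (0:ℝ) < 1 + τ := by linarith [hτ.1]
    have h2 := hL1 τ hτ.1
    apply one_div_le_one_div_of_le
    · positivity
    · have : 1 + τ ≤ Real.exp 1 + τ := by linarith
      nlinarith
  have huppt : ∀ τ ∈ Icc (0:ℝ) t,
      1 / ((1 + τ) * Real.log (Real.exp 1 + τ))
        ≤ 1 / ((Real.exp 1 + τ) * Real.log (Real.exp 1 + τ))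
          + (Real.exp 1 - 1) / (1 + τ) ^ 2 := by
    intro τ hτ
    have h1 : (0:ℝ) < 1 + τ := by linarith [hτ.1]
    have h2 := hL1 τ hτ.1
    have h3 : (0:ℝ) < Real.exp 1 + τ := hpos τ hτ.1
    have h4 : (0:ℝ) < Real.log (Real.exp 1 + τ) := by linarith
    have hsq : (1 + τ) ^ 2 ≤ (1 + τ) * ((Real.exp 1 + τ) * Real.log (Real.exp 1 + τ)) := by
      nlinarith [mul_nonneg (mul_pos h1 h3).le (sub_nonneg.mpr h2),
        mul_le_mul_of_nonneg_left (show 1 + τ ≤ Real.exp 1 + τ by linarith) h1.le]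
    have h5 : 1 / ((1 + τ) * Real.log (Real.exp 1 + τ))
        - 1 / ((Real.exp 1 + τ) * Real.log (Real.exp 1 + τ))
        = (Real.exp 1 - 1) / ((1 + τ) * ((Real.exp 1 + τ) * Real.log (Real.exp 1 + τ))) := by
      field_simp
      ring
    have h6 : (Real.exp 1 - 1) / ((1 + τ) * ((Real.exp 1 + τ) * Real.log (Real.exp 1 + τ)))
        ≤ (Real.exp 1 - 1) / (1 + τ) ^ 2 :=
      div_le_div_of_nonneg_left (by linarith) (by positivity) hsq
    linarith
  -- integral bounds
  set J := ∫ τ in (0:ℝ)..t, 1 / ((1 + τ) * Real.log (Real.exp 1 + τ)) with hJ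
  have hlow : Real.log (Real.log (Real.exp 1 + t)) ≤ J := by
    rw [← hI1]
    exact intervalIntegral.integral_mono_on ht hintf1 hintg hlowpt
  have hup : J ≤ Real.log (Real.log (Real.exp 1 + t)) + (Real.exp 1 - 1) := by
    have := intervalIntegral.integral_mono_on ht hintg hintf2 huppt
    rw [hI2] at this
    have h1 : (0:ℝ) < 1 + t := by linarith
    have h2 : 0 ≤ (Real.exp 1 - 1) * (1 + t)⁻¹ :=
      mul_nonneg (by linarith) (by positivity)
    linarith
  -- rescale by μ
  have hscale : (∫ τ in (0:ℝ)..t, μ / ((1 + τ) * Real.log (Real.exp 1 + τ))) = μ * J := by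
    rw [hJ, ← intervalIntegral.integral_const_mul]
    simp only [mul_one_div]
  -- finish
  have hLpos : 0 < Real.log (Real.exp 1 + t) := by linarith [hL1 t ht]
  have hrpow : (Real.log (Real.exp 1 + t)) ^ (μ/2)
      = Real.exp (Real.log (Real.log (Real.exp 1 + t)) * (μ/2)) :=
    Real.rpow_def_of_pos hLpos (μ/2)
  rw [hscale]
  constructor
  · rw [one_mul, hrpow, Real.exp_le_exp]
    nlinarith
  · rw [hrpow, ← Real.exp_add, Real.exp_le_exp]
    nlinarith
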